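/- Let P be a finite graded poset with 0̂ and 1̂. Then the flag h-vector β_P is multiplicity-free if and only if P has at most two elements of each rank. -/
import Mathlib

/-- The flag f-vector: `flagF P ρ S` is the number of chains of `P` whose set of
ranks (values of `ρ`) is exactly `S`. -/
noncomputable def flagF (P : Type*) [PartialOrder P] (ρ : P → ℕ) (S : Finset ℕ) : ℕ :=
  Set.ncard {C : Finset P | IsChain (· ≤ ·) (C : Set P) ∧ C.image ρ = S}

/-- The flag h-vector: `flagH P ρ S = ∑_{T ⊆ S} (-1)^{#(S∖T)} flagF P ρ T`. -/
noncomputable def flagH (P : Type*) [PartialOrder P] (ρ : P → ℕ) (S : Finset ℕ) : ℤ :=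
  ∑ T ∈ S.powerset, (-1 : ℤ) ^ (S.card - T.card) * (flagF P ρ T : ℤ)

attribute [local instance] Classical.propDecidable
set_option linter.unusedSectionVars false


section Basics
variable {P : Type*} [Fintype P] [PartialOrder P] {ρ : P → ℕ}

lemma rho_mono (hcov : ∀ a b : P, a ⋖ b → ρ b = ρ a + 1) :
    ∀ a b : P, a < b → ρ a < ρ b := by
  intro a
  induction a using WellFoundedGT.induction with
  | _ a IH =>
    intro b hab
    obtain ⟨c, hac, hcb⟩ := exists_covBy_le_of_lt hab
    rcases eq_or_lt_of_le hcb with rfl | hlt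
    · have := hcov a c hac; omega
    · have h1 := IH c hac.lt b hlt
      have := hcov a c hac; omega

lemma rho_between (hcov : ∀ a b : P, a ⋖ b → ρ b = ρ a + 1) :
    ∀ s : ℕ, ∀ a b : P, a ≤ b → ρ a ≤ s → s ≤ ρ b → ∃ y, a ≤ y ∧ y ≤ b ∧ ρ y = s := by
  intro s a
  induction a using WellFoundedGT.induction with
  | _ a IH =>
    intro b hab h1 h2
    rcases eq_or_lt_of_le h1 with heq | hlt
    · exact ⟨a, le_refl a, hab, heq⟩
    · have hne : a < b := by
        rcases eq_or_lt_of_le hab with rfl | h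
        · omega
        · exact h
      obtain ⟨c, hac, hcb⟩ := exists_covBy_le_of_lt hne
      have hc := hcov a c hac
      obtain ⟨y, hy1, hy2, hy3⟩ := IH c hac.lt b hcb (by omega) h2
      exact ⟨y, hac.le.trans hy1, hy2, hy3⟩

lemma chain_rank_inj (hcov : ∀ a b : P, a ⋖ b → ρ b = ρ a + 1) {C : Finset P}
    (hC : IsChain (· ≤ ·) (C : Set P)) {c d : P} (hc : c ∈ C) (hd : d ∈ C)
    (h : ρ c = ρ d) : c = d := by
  by_contra hne
  rcases hC hc hd hne with h1 | h1
  · have := rho_mono hcov c d (lt_of_le_of_ne h1 hne); omega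
  · have := rho_mono hcov d c (lt_of_le_of_ne h1 (Ne.symm hne)); omega

end Basics

open Finset in
noncomputable def cnt {P : Type*} [Fintype P] [PartialOrder P] (ρ : P → ℕ)
    (T : Finset ℕ) (x : P) : ℕ :=
  (Finset.univ.filter (fun C : Finset P =>
    IsChain (· ≤ ·) (C : Set P) ∧ C.image ρ = T ∧ ∀ c ∈ C, c < x)).card

noncomputable def hh {P : Type*} [Fintype P] [PartialOrder P] (ρ : P → ℕ)
    (T : Finset ℕ) (x : P) : ℤ :=
  ∑ T' ∈ T.powerset, (-1 : ℤ) ^ (T.card - T'.card) * (cnt ρ T' x : ℤ)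

section Cnt
variable {P : Type*} [Fintype P] [PartialOrder P] {ρ : P → ℕ}

lemma cnt_empty (x : P) : cnt ρ ∅ x = 1 := by
  have : (Finset.univ.filter (fun C : Finset P =>
      IsChain (· ≤ ·) (C : Set P) ∧ C.image ρ = ∅ ∧ ∀ c ∈ C, c < x)) = {∅} := by
    ext C
    simp only [Finset.mem_filter, Finset.mem_univ, true_and, Finset.mem_singleton,
      Finset.image_eq_empty]
    constructor
    · rintro ⟨-, h, -⟩; exact h
    · rintro rfl
      refine ⟨by simp, rfl, by simp⟩
  rw [cnt, this, Finset.card_singleton]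

lemma hh_empty (x : P) : hh ρ ∅ x = 1 := by
  simp [hh, cnt_empty]

end Cnt

section Split
variable {P : Type*} [Fintype P] [PartialOrder P] {ρ : P → ℕ}

lemma cnt_split (hcov : ∀ a b : P, a ⋖ b → ρ b = ρ a + 1)
    {T : Finset ℕ} {m : ℕ} (hm : m ∈ T) (hmax : ∀ s ∈ T, s ≤ m) (x : P) :
    cnt ρ T x = ∑ y ∈ Finset.univ.filter (fun y => ρ y = m ∧ y < x),
      cnt ρ (T.erase m) y := by
  classical
  set s := Finset.univ.filter (fun C : Finset P =>
    IsChain (· ≤ ·) (C : Set P) ∧ C.image ρ = T ∧ ∀ c ∈ C, c < x) with hs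
  set t := Finset.univ.filter (fun y : P => ρ y = m ∧ y < x) with ht
  set g : Finset P → P := fun C => if h : ∃ y ∈ C, ρ y = m then h.choose else x with hg
  have hmem : ∀ C ∈ s, ∃ y ∈ C, ρ y = m := by
    intro C hC
    rw [hs, Finset.mem_filter] at hC
    obtain ⟨-, -, him, -⟩ := hC
    have : m ∈ C.image ρ := him ▸ hm
    simpa [Finset.mem_image] using this
  have hgC : ∀ C ∈ s, g C ∈ C ∧ ρ (g C) = m := by
    intro C hC
    have h := hmem C hC
    rw [hg]
    simp only [dif_pos h]
    exact ⟨h.choose_spec.1, h.choose_spec.2⟩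
  have hmapsto : ∀ C ∈ s, g C ∈ t := by
    intro C hC
    obtain ⟨h1, h2⟩ := hgC C hC
    have hC' := hC
    rw [hs, Finset.mem_filter] at hC'
    rw [ht, Finset.mem_filter]
    exact ⟨Finset.mem_univ _, h2, hC'.2.2.2 _ h1⟩
  have := Finset.card_eq_sum_card_fiberwise hmapsto
  rw [cnt, ← hs, this]
  refine Finset.sum_congr rfl ?_
  intro y hy
  rw [ht, Finset.mem_filter] at hy
  obtain ⟨-, hym, hyx⟩ := hy
  rw [cnt]
  refine Finset.card_bij' (fun C _ => C.erase y) (fun C' _ => insert y C') ?_ ?_ ?_ ?_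
  · -- forward maps into target
    intro C hC
    rw [Finset.mem_filter] at hC
    obtain ⟨hCs, hgCy⟩ := hC
    have hsC := hCs
    rw [hs, Finset.mem_filter] at hsC
    obtain ⟨-, hchain, him, hlt⟩ := hsC
    have hyC : y ∈ C := by
      have := (hgC C hCs).1; rwa [hgCy] at this
    have huniq : ∀ z ∈ C, ρ z = m → z = y :=
      fun z hz hzm => chain_rank_inj hcov hchain hz hyC (by rw [hzm, hym])
    rw [Finset.mem_filter]
    refine ⟨Finset.mem_univ _, hchain.mono (by simp [Finset.coe_subset, Finset.erase_subset]), ?_, ?_⟩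
    · ext k
      simp only [Finset.mem_image, Finset.mem_erase]
      constructor
      · rintro ⟨c, ⟨hcy, hcC⟩, rfl⟩
        refine ⟨fun h => hcy (huniq c hcC h), him ▸ Finset.mem_image_of_mem ρ hcC⟩
      · rintro ⟨hkm, hkT⟩
        rw [← him] at hkT
        obtain ⟨c, hcC, rfl⟩ := Finset.mem_image.mp hkT
        exact ⟨c, ⟨fun h => hkm (h ▸ hym), hcC⟩, rfl⟩
    · intro c hc
      rw [Finset.mem_erase] at hc
      have hcm : ρ c ∈ T := him ▸ Finset.mem_image_of_mem ρ hc.2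
      have hcm' : ρ c ≠ m := fun h => hc.1 (huniq c hc.2 h)
      have : ρ c < ρ y := by have := hmax _ hcm; omega
      rcases hchain hc.2 hyC hc.1 with h | h
      · exact lt_of_le_of_ne h (fun h' => by rw [h'] at this; omega)
      · exact absurd (rho_mono hcov _ _ (lt_of_le_of_ne h
          (fun h' => hc.1 h'.symm))) (by omega)
  · -- backward maps into source fiber
    intro C' hC'
    rw [Finset.mem_filter] at hC'
    obtain ⟨-, hchain, him, hlt⟩ := hC'
    have hyC' : y ∉ C' := fun h => lt_irrefl y (hlt y h)
    have hins_chain : IsChain (· ≤ ·) ((insert y C' : Finset P) : Set P) := by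
      rw [Finset.coe_insert]
      exact hchain.insert (fun b hb _ => Or.inr (hlt b hb).le)
    have hins_im : (insert y C').image ρ = T := by
      rw [Finset.image_insert, him, hym, Finset.insert_erase hm]
    have hins_lt : ∀ c ∈ insert y C', c < x := by
      intro c hc
      rcases Finset.mem_insert.mp hc with rfl | h
      · exact hyx
      · exact (hlt c h).trans hyx
    have hins_s : insert y C' ∈ s := by
      rw [hs, Finset.mem_filter]
      exact ⟨Finset.mem_univ _, hins_chain, hins_im, hins_lt⟩
    rw [Finset.mem_filter]
    refine ⟨hins_s, ?_⟩
    obtain ⟨h1, h2⟩ := hgC _ hins_s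
    rcases Finset.mem_insert.mp h1 with h | h
    · exact h
    · exfalso
      have : ρ (g (insert y C')) ∈ T.erase m := him ▸ Finset.mem_image_of_mem ρ h
      rw [h2] at this
      exact (Finset.mem_erase.mp this).1 rfl
  · intro C hC
    rw [Finset.mem_filter] at hC
    have hyC : y ∈ C := by
      have := (hgC C hC.1).1; rwa [hC.2] at this
    exact Finset.insert_erase hyC
  · intro C' hC'
    rw [Finset.mem_filter] at hC'
    have hyC' : y ∉ C' := fun h => lt_irrefl y (hC'.2.2.2 y h)
    exact Finset.erase_insert hyC'

end Split

section Rec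
variable {P : Type*} [Fintype P] [PartialOrder P] {ρ : P → ℕ}

lemma hh_rec (hcov : ∀ a b : P, a ⋖ b → ρ b = ρ a + 1)
    {T : Finset ℕ} {m : ℕ} (hm : m ∈ T) (hmax : ∀ s ∈ T, s ≤ m) (x : P) :
    hh ρ T x = (∑ y ∈ Finset.univ.filter (fun y => ρ y = m ∧ y < x),
      hh ρ (T.erase m) y) - hh ρ (T.erase m) x := by
  classical
  set T' := T.erase m with hT'
  have hmT : m ∉ T' := Finset.notMem_erase m T
  have hTeq : T = insert m T' := (Finset.insert_erase hm).symm
  have hcard : T.card = T'.card + 1 := by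
    rw [hTeq, Finset.card_insert_of_notMem hmT]
  have key : ∀ t : Finset ℕ, t ⊆ T' →
      ((-1:ℤ) ^ (T.card - t.card) = -((-1:ℤ) ^ (T'.card - t.card)) ∧
       (-1:ℤ) ^ (T.card - (insert m t).card) = (-1:ℤ) ^ (T'.card - t.card)) := by
    intro t ht
    have h1 : t.card ≤ T'.card := Finset.card_le_card ht
    have h2 : m ∉ t := fun h => hmT (ht h)
    have h3 : (insert m t).card = t.card + 1 := Finset.card_insert_of_notMem h2
    constructor
    · have : T.card - t.card = (T'.card - t.card) + 1 := by omega
      rw [this, pow_succ]; ring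
    · congr 1; omega
  have hsplit : hh ρ T x = (∑ t ∈ T'.powerset,
        (-1:ℤ) ^ (T'.card - t.card) * (cnt ρ (insert m t) x : ℤ)) - hh ρ T' x := by
    rw [hh, hTeq, Finset.sum_powerset_insert hmT, ← hTeq]
    have e1 : ∑ t ∈ T'.powerset, (-1:ℤ) ^ (T.card - t.card) * (cnt ρ t x : ℤ)
        = - hh ρ T' x := by
      rw [hh, ← Finset.sum_neg_distrib]
      refine Finset.sum_congr rfl ?_
      intro t ht
      rw [(key t (Finset.mem_powerset.mp ht)).1]
      ring
    have e2 : ∑ t ∈ T'.powerset, (-1:ℤ) ^ (T.card - (insert m t).card) *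
          (cnt ρ (insert m t) x : ℤ)
        = ∑ t ∈ T'.powerset, (-1:ℤ) ^ (T'.card - t.card) * (cnt ρ (insert m t) x : ℤ) := by
      refine Finset.sum_congr rfl ?_
      intro t ht
      rw [(key t (Finset.mem_powerset.mp ht)).2]
    rw [e1, e2]
    ring
  rw [hsplit]
  congr 1
  have hins : ∀ t ∈ T'.powerset, cnt ρ (insert m t) x
      = ∑ y ∈ Finset.univ.filter (fun y => ρ y = m ∧ y < x), cnt ρ t y := by
    intro t ht
    rw [Finset.mem_powerset] at ht
    have h2 : m ∉ t := fun h => hmT (ht h)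
    have := cnt_split hcov (T := insert m t) (m := m) (Finset.mem_insert_self m t)
      (by
        intro s hs
        rcases Finset.mem_insert.mp hs with rfl | hs
        · exact le_refl _
        · exact hmax s (Finset.mem_of_mem_erase (ht hs))) x
    rwa [Finset.erase_insert h2] at this
  calc ∑ t ∈ T'.powerset, (-1:ℤ) ^ (T'.card - t.card) * (cnt ρ (insert m t) x : ℤ)
      = ∑ t ∈ T'.powerset, ∑ y ∈ Finset.univ.filter (fun y => ρ y = m ∧ y < x),
          (-1:ℤ) ^ (T'.card - t.card) * (cnt ρ t y : ℤ) := by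
        refine Finset.sum_congr rfl ?_
        intro t ht
        rw [hins t ht]
        push_cast
        rw [Finset.mul_sum]
    _ = ∑ y ∈ Finset.univ.filter (fun y => ρ y = m ∧ y < x), ∑ t ∈ T'.powerset,
          (-1:ℤ) ^ (T'.card - t.card) * (cnt ρ t y : ℤ) := Finset.sum_comm
    _ = ∑ y ∈ Finset.univ.filter (fun y => ρ y = m ∧ y < x), hh ρ T' y := rfl

end Rec

section Congr
variable {P : Type*} [Fintype P] [PartialOrder P] {ρ : P → ℕ}

lemma down_iff_aux (hcov : ∀ a b : P, a ⋖ b → ρ b = ρ a + 1)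
    {m m' : ℕ} (hmm : m' < m) {x₁ x₂ : P} (h1 : m < ρ x₁)
    (hD : ∀ y : P, ρ y = m → (y < x₁ → y < x₂)) :
    ∀ y : P, ρ y = m' → y < x₁ → y < x₂ := by
  intro y hy hyx
  obtain ⟨z, hz1, hz2, hz3⟩ := rho_between hcov m y x₁ hyx.le (by omega) (by omega)
  have hzy : y < z := lt_of_le_of_ne hz1 (fun h => by rw [← h] at hz3; omega)
  have hzx : z < x₁ := lt_of_le_of_ne hz2 (fun h => by rw [h] at hz3; omega)
  exact hzy.trans (hD z hz3 hzx)

lemma hh_congr (hcov : ∀ a b : P, a ⋖ b → ρ b = ρ a + 1) :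
    ∀ k : ℕ, ∀ T : Finset ℕ, T.card ≤ k → ∀ m : ℕ, m ∈ T → (∀ s ∈ T, s ≤ m) →
    ∀ x₁ x₂ : P, m < ρ x₁ → m < ρ x₂ →
    (∀ y : P, ρ y = m → (y < x₁ ↔ y < x₂)) → hh ρ T x₁ = hh ρ T x₂ := by
  intro k
  induction k with
  | zero =>
    intro T hT m hm
    have := Finset.card_pos.mpr ⟨m, hm⟩
    omega
  | succ k IH =>
    intro T hT m hm hmax x₁ x₂ hx1 hx2 hD
    rw [hh_rec hcov hm hmax x₁, hh_rec hcov hm hmax x₂]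
    have hfil : Finset.univ.filter (fun y : P => ρ y = m ∧ y < x₁)
        = Finset.univ.filter (fun y : P => ρ y = m ∧ y < x₂) := by
      ext y
      simp only [Finset.mem_filter, Finset.mem_univ, true_and]
      constructor
      · rintro ⟨h, h'⟩; exact ⟨h, (hD y h).mp h'⟩
      · rintro ⟨h, h'⟩; exact ⟨h, (hD y h).mpr h'⟩
    rw [hfil]
    have htail : hh ρ (T.erase m) x₁ = hh ρ (T.erase m) x₂ := by
      rcases Finset.eq_empty_or_nonempty (T.erase m) with he | hne
      · rw [he, hh_empty, hh_empty]
      · set m' := (T.erase m).max' hne with hm'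
        have hm'mem : m' ∈ T.erase m := Finset.max'_mem _ hne
        have hm'lt : m' < m := by
          have h1 := hmax m' (Finset.mem_of_mem_erase hm'mem)
          have h2 := (Finset.mem_erase.mp hm'mem).1
          omega
        have hcard : (T.erase m).card ≤ k := by
          have := Finset.card_erase_of_mem hm
          omega
        refine IH (T.erase m) hcard m' hm'mem
          (fun s hs => Finset.le_max' _ s hs) x₁ x₂ (by omega) (by omega) ?_
        intro y hy
        constructor
        · exact down_iff_aux hcov hm'lt hx1 (fun z hz => (hD z hz).mp) y hy
        · exact down_iff_aux hcov hm'lt hx2 (fun z hz => (hD z hz).mpr) y hy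
    rw [htail]

end Congr

section Main
variable {P : Type*} [Fintype P] [PartialOrder P] [BoundedOrder P] {ρ : P → ℕ}

lemma downset_nonempty (hbot : ρ ⊥ = 0) (hcov : ∀ a b : P, a ⋖ b → ρ b = ρ a + 1)
    {m : ℕ} {x : P} (h : m < ρ x) :
    (Finset.univ.filter fun y : P => ρ y = m ∧ y < x).Nonempty := by
  obtain ⟨y, hy1, hy2, hy3⟩ := rho_between hcov m ⊥ x bot_le (by omega) (by omega)
  refine ⟨y, ?_⟩
  rw [Finset.mem_filter]
  exact ⟨Finset.mem_univ _, hy3, lt_of_le_of_ne hy2 (fun hxy => by rw [hxy] at hy3; omega)⟩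

lemma main_lemma (hbot : ρ ⊥ = 0) (hcov : ∀ a b : P, a ⋖ b → ρ b = ρ a + 1)
    (hr : ∀ i : ℕ, (Finset.univ.filter (fun y : P => ρ y = i)).card ≤ 2) :
    ∀ k : ℕ, ∀ T : Finset ℕ, T.card ≤ k → ∀ x : P, (∀ s ∈ T, s < ρ x) →
    ((∀ hne : T.Nonempty,
        (Finset.univ.filter (fun y : P => ρ y = T.max' hne ∧ y < x)).card = 1 →
        hh ρ T x = 0)
      ∧ (hh ρ T x = 0 ∨ hh ρ T x = 1 ∨ hh ρ T x = -1)) := by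
  intro k
  induction k with
  | zero =>
    intro T hT x hx
    have hTe : T = ∅ := Finset.card_eq_zero.mp (by omega)
    subst hTe
    exact ⟨fun hne _ => absurd hne (by simp), by rw [hh_empty]; tauto⟩
  | succ k IH =>
    intro T hT x hx
    rcases Finset.eq_empty_or_nonempty T with rfl | hne
    · exact ⟨fun hne _ => absurd hne (by simp), by rw [hh_empty]; tauto⟩
    set m := T.max' hne with hmdef
    have hm : m ∈ T := T.max'_mem hne
    have hmax : ∀ s ∈ T, s ≤ m := fun s hs => T.le_max' s hs
    have hcT' : (T.erase m).card ≤ k := by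
      have := Finset.card_erase_of_mem hm
      have := Finset.card_pos.mpr ⟨m, hm⟩
      omega
    have hmx : m < ρ x := hx m hm
    set L := Finset.univ.filter (fun y : P => ρ y = m ∧ y < x) with hLdef
    have hLne : L.Nonempty := downset_nonempty hbot hcov hmx
    have hL2 : L.card ≤ 2 := by
      refine le_trans (Finset.card_le_card ?_) (hr m)
      intro y hy
      rw [Finset.mem_filter] at hy ⊢
      exact ⟨hy.1, hy.2.1⟩
    have hrec : hh ρ T x = (∑ y ∈ L, hh ρ (T.erase m) y) - hh ρ (T.erase m) x :=
      hh_rec hcov hm hmax x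
    -- helper: congruence via equal down-sets
    have ceq : ∀ hne2 : (T.erase m).Nonempty, ∀ u v : P,
        (T.erase m).max' hne2 < ρ u → (T.erase m).max' hne2 < ρ v →
        (Finset.univ.filter (fun y : P => ρ y = (T.erase m).max' hne2 ∧ y < u)
          = Finset.univ.filter (fun y : P => ρ y = (T.erase m).max' hne2 ∧ y < v)) →
        hh ρ (T.erase m) u = hh ρ (T.erase m) v := by
      intro hne2 u v hu hv hfil
      set m' := (T.erase m).max' hne2 with hm'def
      have hm'mem : m' ∈ T.erase m := Finset.max'_mem _ hne2
      have hm'lt : m' < m := by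
        have h1 := hmax m' (Finset.mem_of_mem_erase hm'mem)
        have h2 := (Finset.mem_erase.mp hm'mem).1
        omega
      refine hh_congr hcov ((T.erase m).card) (T.erase m) le_rfl m' hm'mem
        (fun s hs => Finset.le_max' _ s hs) u v (by omega) (by omega) ?_
      intro y hy
      constructor
      · intro h
        have : y ∈ Finset.univ.filter (fun z : P => ρ z = m' ∧ z < u) := by
          rw [Finset.mem_filter]; exact ⟨Finset.mem_univ _, hy, h⟩
        rw [hfil, Finset.mem_filter] at this
        exact this.2.2
      · intro h
        have : y ∈ Finset.univ.filter (fun z : P => ρ z = m' ∧ z < v) := by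
          rw [Finset.mem_filter]; exact ⟨Finset.mem_univ _, hy, h⟩
        rw [← hfil, Finset.mem_filter] at this
        exact this.2.2
    -- the singleton case
    have hsing : L.card = 1 → hh ρ T x = 0 := by
      intro h1
      obtain ⟨a, ha⟩ := Finset.card_eq_one.mp h1
      have haL : a ∈ L := by rw [ha]; exact Finset.mem_singleton_self a
      rw [hLdef, Finset.mem_filter] at haL
      obtain ⟨-, ham, hax⟩ := haL
      rw [hrec, ha, Finset.sum_singleton]
      rcases Finset.eq_empty_or_nonempty (T.erase m) with he | hne2
      · rw [he, hh_empty, hh_empty]; ring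
      · set m' := (T.erase m).max' hne2 with hm'def
        have hm'mem : m' ∈ T.erase m := Finset.max'_mem _ hne2
        have hm'lt : m' < m := by
          have h1 := hmax m' (Finset.mem_of_mem_erase hm'mem)
          have h2 := (Finset.mem_erase.mp hm'mem).1
          omega
        have heq : hh ρ (T.erase m) a = hh ρ (T.erase m) x := by
          refine ceq hne2 a x (by omega) (by omega) ?_
          ext z
          simp only [Finset.mem_filter, Finset.mem_univ, true_and]
          constructor
          · rintro ⟨hz, hza⟩; exact ⟨hz, hza.trans hax⟩
          · rintro ⟨hz, hzx⟩
            refine ⟨hz, ?_⟩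
            obtain ⟨w, hw1, hw2, hw3⟩ := rho_between hcov m z x hzx.le (by omega) (by omega)
            have hzw : z < w := lt_of_le_of_ne hw1 (fun h => by rw [← h] at hw3; omega)
            have hwx : w < x := lt_of_le_of_ne hw2 (fun h => by rw [h] at hw3; omega)
            have hwL : w ∈ L := by
              rw [hLdef, Finset.mem_filter]; exact ⟨Finset.mem_univ _, hw3, hwx⟩
            rw [ha, Finset.mem_singleton] at hwL
            rwa [hwL] at hzw
        rw [heq]; ring
    refine ⟨fun hne' h1 => hsing h1, ?_⟩
    have hc12 : L.card = 1 ∨ L.card = 2 := by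
      have := Finset.card_pos.mpr hLne
      omega
    rcases hc12 with h1 | h2
    · left; exact hsing h1
    · obtain ⟨a, b, hab, hLeq⟩ := Finset.card_eq_two.mp h2
      have haL : a ∈ L := by rw [hLeq]; exact Finset.mem_insert_self a _
      have hbL : b ∈ L := by rw [hLeq]; simp
      rw [hLdef, Finset.mem_filter] at haL hbL
      obtain ⟨-, ham, hax⟩ := haL
      obtain ⟨-, hbm, hbx⟩ := hbL
      rw [hrec, hLeq, Finset.sum_insert (by simpa using hab), Finset.sum_singleton]
      rcases Finset.eq_empty_or_nonempty (T.erase m) with he | hne2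
      · rw [he, hh_empty, hh_empty, hh_empty]
        right; left; ring
      · set m' := (T.erase m).max' hne2 with hm'def
        have hm'mem : m' ∈ T.erase m := Finset.max'_mem _ hne2
        have hm'lt : m' < m := by
          have h1 := hmax m' (Finset.mem_of_mem_erase hm'mem)
          have h2 := (Finset.mem_erase.mp hm'mem).1
          omega
        set La := Finset.univ.filter (fun y : P => ρ y = m' ∧ y < a) with hLadef
        set Lb := Finset.univ.filter (fun y : P => ρ y = m' ∧ y < b) with hLbdef
        set Lx := Finset.univ.filter (fun y : P => ρ y = m' ∧ y < x) with hLxdef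
        set Lvl := Finset.univ.filter (fun y : P => ρ y = m') with hLvldef
        have hLaS : La ⊆ Lvl := fun y hy => by
          rw [hLadef, Finset.mem_filter] at hy
          rw [hLvldef, Finset.mem_filter]; exact ⟨hy.1, hy.2.1⟩
        have hLbS : Lb ⊆ Lvl := fun y hy => by
          rw [hLbdef, Finset.mem_filter] at hy
          rw [hLvldef, Finset.mem_filter]; exact ⟨hy.1, hy.2.1⟩
        have hLvl2 : Lvl.card ≤ 2 := hr m'
        have hLaNe : La.Nonempty := downset_nonempty hbot hcov (by omega)
        have hLbNe : Lb.Nonempty := downset_nonempty hbot hcov (by omega)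
        have hxab : Lx = La ∪ Lb := by
          ext z
          simp only [hLadef, hLbdef, hLxdef, Finset.mem_union, Finset.mem_filter,
            Finset.mem_univ, true_and]
          constructor
          · rintro ⟨hz, hzx⟩
            obtain ⟨w, hw1, hw2, hw3⟩ := rho_between hcov m z x hzx.le (by omega) (by omega)
            have hzw : z < w := lt_of_le_of_ne hw1 (fun h => by rw [← h] at hw3; omega)
            have hwx : w < x := lt_of_le_of_ne hw2 (fun h => by rw [h] at hw3; omega)
            have hwL : w ∈ L := by
              rw [hLdef, Finset.mem_filter]; exact ⟨Finset.mem_univ _, hw3, hwx⟩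
            rw [hLeq, Finset.mem_insert, Finset.mem_singleton] at hwL
            rcases hwL with rfl | rfl
            · exact Or.inl ⟨hz, hzw⟩
            · exact Or.inr ⟨hz, hzw⟩
          · rintro (⟨hz, hza⟩ | ⟨hz, hzb⟩)
            · exact ⟨hz, hza.trans hax⟩
            · exact ⟨hz, hzb.trans hbx⟩
        have IHa := IH (T.erase m) hcT' a
          (fun s hs => by
            have h1 := Finset.le_max' (T.erase m) s hs
            rw [← hm'def] at h1
            omega)
        have IHb := IH (T.erase m) hcT' b
          (fun s hs => by
            have h1 := Finset.le_max' (T.erase m) s hs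
            rw [← hm'def] at h1
            omega)
        have IHx := IH (T.erase m) hcT' x
          (fun s hs => by
            have h1 := Finset.le_max' (T.erase m) s hs
            rw [← hm'def] at h1
            omega)
        by_cases habL : La = Lb
        · have e1 : hh ρ (T.erase m) b = hh ρ (T.erase m) a :=
            ceq hne2 b a (by omega) (by omega) (by rw [← hm'def, ← hLbdef, ← hLadef, habL])
          have e2 : hh ρ (T.erase m) x = hh ρ (T.erase m) a :=
            ceq hne2 x a (by omega) (by omega)
              (by rw [← hm'def, ← hLxdef, ← hLadef, hxab, habL, Finset.union_self])
          rw [e1, e2]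
          rcases IHx.2 with h | h | h <;> rcases IHa.2 with h' | h' | h' <;> omega
        · have hca : La.card = 1 ∨ La.card = 2 := by
            have h1 := Finset.card_pos.mpr hLaNe
            have h2 := le_trans (Finset.card_le_card hLaS) hLvl2
            omega
          have hcb : Lb.card = 1 ∨ Lb.card = 2 := by
            have h1 := Finset.card_pos.mpr hLbNe
            have h2 := le_trans (Finset.card_le_card hLbS) hLvl2
            omega
          have hfull : ∀ s : Finset P, s ⊆ Lvl → s.card = 2 → s = Lvl :=
            fun s hs hc => Finset.eq_of_subset_of_card_le hs (by omega)
          rcases hca with ha1 | ha2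
          · rcases hcb with hb1 | hb2
            · -- both singletons, distinct
              have ea : hh ρ (T.erase m) a = 0 := IHa.1 hne2 ha1
              have eb : hh ρ (T.erase m) b = 0 := IHb.1 hne2 hb1
              rw [ea, eb]
              rcases IHx.2 with h | h | h <;> omega
            · -- La singleton, Lb full
              have hLbF : Lb = Lvl := hfull Lb hLbS hb2
              have ea : hh ρ (T.erase m) a = 0 := IHa.1 hne2 ha1
              have ex : hh ρ (T.erase m) x = hh ρ (T.erase m) b := by
                refine ceq hne2 x b (by omega) (by omega) ?_
                rw [← hm'def, ← hLxdef, ← hLbdef, hxab, Finset.union_eq_right.mpr]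
                rw [hLbF]
                exact hLaS
              rw [ea, ex]
              left; ring
          · rcases hcb with hb1 | hb2
            · -- Lb singleton, La full
              have hLaF : La = Lvl := hfull La hLaS ha2
              have eb : hh ρ (T.erase m) b = 0 := IHb.1 hne2 hb1
              have ex : hh ρ (T.erase m) x = hh ρ (T.erase m) a := by
                refine ceq hne2 x a (by omega) (by omega) ?_
                rw [← hm'def, ← hLxdef, ← hLadef, hxab, Finset.union_eq_left.mpr]
                rw [hLaF]
                exact hLbS
              rw [eb, ex]
              left; ring
            · exact absurd ((hfull La hLaS ha2).trans (hfull Lb hLbS hb2).symm) habL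

end Main


section Glue
variable {P : Type*} [Fintype P] [PartialOrder P] {ρ : P → ℕ}

lemma flagF_eq_filter (S : Finset ℕ) :
    flagF P ρ S = (Finset.univ.filter (fun C : Finset P =>
      IsChain (· ≤ ·) (C : Set P) ∧ C.image ρ = S)).card := by
  rw [flagF, Set.ncard_eq_toFinset_card']
  congr 1
  ext C
  simp

lemma level_ncard_eq (i : ℕ) :
    Set.ncard {x : P | ρ x = i} = (Finset.univ.filter (fun y : P => ρ y = i)).card := by
  rw [Set.ncard_eq_toFinset_card']
  congr 1
  ext x
  simp

lemma flagF_empty : flagF P ρ (∅ : Finset ℕ) = 1 := by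
  rw [flagF]
  have : {C : Finset P | IsChain (· ≤ ·) (C : Set P) ∧ C.image ρ = ∅} = {(∅ : Finset P)} := by
    ext C
    simp only [Set.mem_setOf_eq, Set.mem_singleton_iff, Finset.image_eq_empty]
    constructor
    · rintro ⟨-, h⟩; exact h
    · rintro rfl; exact ⟨by simp, rfl⟩
  rw [this, Set.ncard_singleton]

lemma flagF_singleton (hcov : ∀ a b : P, a ⋖ b → ρ b = ρ a + 1) (i : ℕ) :
    flagF P ρ {i} = Set.ncard {x : P | ρ x = i} := by
  rw [flagF]
  have himg : {C : Finset P | IsChain (· ≤ ·) (C : Set P) ∧ C.image ρ = {i}}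
      = (fun x : P => ({x} : Finset P)) '' {x : P | ρ x = i} := by
    ext C
    simp only [Set.mem_setOf_eq, Set.mem_image]
    constructor
    · rintro ⟨hch, him⟩
      have : i ∈ C.image ρ := by rw [him]; exact Finset.mem_singleton_self i
      obtain ⟨c, hc, hci⟩ := Finset.mem_image.mp this
      refine ⟨c, hci, ?_⟩
      ext d
      simp only [Finset.mem_singleton]
      constructor
      · rintro rfl; exact hc
      · intro hd
        have : ρ d ∈ C.image ρ := Finset.mem_image_of_mem ρ hd
        rw [him, Finset.mem_singleton] at this
        exact chain_rank_inj hcov hch hd hc (by rw [this, hci])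
    · rintro ⟨x, hx, rfl⟩
      refine ⟨?_, by rw [Finset.image_singleton, hx]⟩
      rw [Finset.coe_singleton]
      exact IsChain.singleton
  rw [himg, Set.ncard_image_of_injective _ (fun a b h => Finset.singleton_injective h)]

lemma flagH_singleton (hcov : ∀ a b : P, a ⋖ b → ρ b = ρ a + 1) (i : ℕ) :
    flagH P ρ {i} = (Set.ncard {x : P | ρ x = i} : ℤ) - 1 := by
  rw [flagH, show ({i} : Finset ℕ).powerset = {∅, {i}} from rfl,
    Finset.sum_insert (by
      simp only [Finset.mem_singleton]
      exact fun h => Finset.singleton_ne_empty i h.symm),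
    Finset.sum_singleton]
  rw [flagF_empty, flagF_singleton hcov i]
  simp
  ring

end Glue

section Glue2
variable {P : Type*} [Fintype P] [PartialOrder P] [BoundedOrder P] {ρ : P → ℕ} {n : ℕ}

lemma flagH_eq_hh (htop : ρ ⊤ = n) {S : Finset ℕ}
    (hS : ∀ s ∈ S, 1 ≤ s ∧ s ≤ n - 1) :
    flagH P ρ S = hh ρ S ⊤ := by
  rw [flagH, hh]
  refine Finset.sum_congr rfl ?_
  intro T hT
  rw [Finset.mem_powerset] at hT
  congr 1
  have : flagF P ρ T = cnt ρ T ⊤ := by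
    rw [flagF_eq_filter, cnt]
    congr 1
    ext C
    simp only [Finset.mem_filter, Finset.mem_univ, true_and]
    constructor
    · rintro ⟨hch, him⟩
      refine ⟨hch, him, ?_⟩
      intro c hc
      have hmem : ρ c ∈ T := him ▸ Finset.mem_image_of_mem ρ hc
      have hb := hS (ρ c) (hT hmem)
      have hne : c ≠ ⊤ := fun h => by rw [h, htop] at hb; omega
      exact lt_top_iff_ne_top.mpr hne
    · rintro ⟨hch, him, -⟩; exact ⟨hch, him⟩
  rw [this]

end Glue2

/-- A finite graded poset `P` of rank `n` with `0̂` and `1̂` has multiplicity-free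
flag h-vector (i.e. `β_P(S) ∈ {0, 1, -1}` for all `S ⊆ [n-1]`) if and only if `P`
has at most two elements of each rank. -/
theorem stmt19 (P : Type*) [Fintype P] [PartialOrder P] [BoundedOrder P]
    (n : ℕ) (ρ : P → ℕ) (hbot : ρ ⊥ = 0) (htop : ρ ⊤ = n)
    (hcov : ∀ a b : P, a ⋖ b → ρ b = ρ a + 1) :
    (∀ S ⊆ Finset.Icc 1 (n - 1), flagH P ρ S = 0 ∨ flagH P ρ S = 1 ∨
        flagH P ρ S = -1) ↔
      ∀ i : ℕ, Set.ncard {x : P | ρ x = i} ≤ 2 := by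
  constructor
  · intro hmf i
    by_cases h0 : i = 0
    · subst h0
      have hsub : {x : P | ρ x = 0} ⊆ {⊥} := by
        intro x hx
        rcases eq_or_lt_of_le (bot_le : (⊥ : P) ≤ x) with h | h
        · simp [← h]
        · have h2 := rho_mono hcov ⊥ x h
          rw [hbot] at h2
          simp only [Set.mem_setOf_eq] at hx
          exact absurd hx (by omega)
      calc Set.ncard {x : P | ρ x = 0} ≤ Set.ncard ({⊥} : Set P) :=
            Set.ncard_le_ncard hsub (Set.finite_singleton _)
        _ ≤ 2 := by rw [Set.ncard_singleton]; omega
    · by_cases hn : n ≤ i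
      · have hsub : {x : P | ρ x = i} ⊆ {⊤} := by
          intro x hx
          rcases eq_or_lt_of_le (le_top : x ≤ (⊤ : P)) with h | h
          · simp [h]
          · have h2 := rho_mono hcov x ⊤ h
            rw [htop] at h2
            simp only [Set.mem_setOf_eq] at hx
            exact absurd hx (by omega)
        calc Set.ncard {x : P | ρ x = i} ≤ Set.ncard ({⊤} : Set P) :=
              Set.ncard_le_ncard hsub (Set.finite_singleton _)
          _ ≤ 2 := by rw [Set.ncard_singleton]; omega
      · have hmem : ({i} : Finset ℕ) ⊆ Finset.Icc 1 (n - 1) := by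
          intro s hs
          rw [Finset.mem_singleton] at hs
          rw [Finset.mem_Icc]
          omega
        have h := hmf {i} hmem
        rw [flagH_singleton hcov i] at h
        omega
  · intro hr S hS
    have hr' : ∀ j : ℕ, (Finset.univ.filter (fun y : P => ρ y = j)).card ≤ 2 := by
      intro j
      have := hr j
      rwa [level_ncard_eq] at this
    have hSb : ∀ s ∈ S, 1 ≤ s ∧ s ≤ n - 1 := by
      intro s hs
      have := hS hs
      rwa [Finset.mem_Icc] at this
    rw [flagH_eq_hh htop hSb]
    refine (main_lemma hbot hcov hr' S.card S le_rfl ⊤ ?_).2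
    intro s hs
    have := hSb s hs
    rw [htop]
    omega
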